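/- arXiv:2205.10500 — 3 statements merged into one kernel-verified Lean document; each statement's English description precedes it below -/
import Mathlib

section
/- The mapping A(X) := (1/8) X (15 I_p - 10 X^T X + 3 (X^T X)^2) is a bijection from ℝ^{n×p} to ℝ^{n×p} with continuous inverse, i.e., a homeomorphism. -/
/-!
Write `A(X) = X q(XᵀX)` with `q(s) = 15/8 - 5/4 s + 3/8 s² = 5/6 + 3/8 (s - 5/3)² > 0`.
For any continuous `g`, the map `X ↦ X g(XᵀX)` sends the Gram matrix `XᵀX` to `φ_g(XᵀX)` with
`φ_g(s) = s g(s)²`, so two such maps compose to `X ↦ X (f · g ∘ φ_f)(XᵀX)`. For `g = q`,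
`φ_q' = 15/8 q(s) (s - 1)² ≥ 0` vanishes only at `s = 1` and `φ_q(s) ≥ 25/36 s` for `s ≥ 0`, so
`φ_q` is a homeomorphism of `ℝ`; then `Y ↦ Y r(YᵀY)` with `r = 1 / (q ∘ φ_q⁻¹)` is a two-sided
inverse of `A`. Both maps are continuous because the continuous functional calculus is continuous
in the matrix.
-/

open Matrix

/-- The constraint dissolving mapping `A(X) = (1/8) X (15 Iₚ - 10 XᵀX + 3 (XᵀX)²)`. -/
noncomputable def cdMap {n p : ℕ} (X : Matrix (Fin n) (Fin p) ℝ) : Matrix (Fin n) (Fin p) ℝ :=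
  (1 / 8 : ℝ) • (X * ((15 : ℝ) • (1 : Matrix (Fin p) (Fin p) ℝ)
    - (10 : ℝ) • (Xᵀ * X) + (3 : ℝ) • (Xᵀ * X) ^ 2))

open Filter

lemma strictMono_of_hasDerivAt_pos_of_ne {f f' : ℝ → ℝ} (a : ℝ)
    (hf : ∀ x, HasDerivAt f (f' x) x) (hf' : ∀ x ≠ a, 0 < f' x) : StrictMono f := by
  have hcont : Continuous f := continuous_iff_continuousAt.2 fun x ↦ (hf x).continuousAt
  have hmono : ∀ D : Set ℝ, Convex ℝ D → a ∉ interior D → StrictMonoOn f D := fun D hD ha ↦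
    strictMonoOn_of_hasDerivWithinAt_pos hD hcont.continuousOn
      (fun x _ ↦ (hf x).hasDerivWithinAt) fun x hx ↦ hf' x (ne_of_mem_of_not_mem hx ha)
  exact StrictMonoOn.Iic_union_Ici (hmono _ (convex_Iic a) (by simp))
    (hmono _ (convex_Ici a) (by simp))

noncomputable def cdPoly (s : ℝ) : ℝ := 15 / 8 - 5 / 4 * s + 3 / 8 * s ^ 2

noncomputable def cdGramPoly (s : ℝ) : ℝ := s * cdPoly s ^ 2

lemma five_sixths_le_cdPoly (s : ℝ) : 5 / 6 ≤ cdPoly s := by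
  unfold cdPoly; nlinarith [sq_nonneg (s - 5 / 3)]

lemma cdPoly_pos (s : ℝ) : 0 < cdPoly s := by
  linarith [five_sixths_le_cdPoly s]

lemma continuous_cdPoly : Continuous cdPoly := by
  unfold cdPoly; fun_prop

lemma hasDerivAt_cdGramPoly (s : ℝ) :
    HasDerivAt cdGramPoly (15 / 8 * cdPoly s * (s - 1) ^ 2) s := by
  have hq : HasDerivAt cdPoly (-5 / 4 + 3 / 4 * s) s := by
    have := (((hasDerivAt_id' s).const_mul (5 / 4 : ℝ)).const_sub (15 / 8 : ℝ)).add
      ((hasDerivAt_pow 2 s).const_mul (3 / 8 : ℝ))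
    exact this.congr_deriv (by norm_num; ring)
  refine ((hasDerivAt_id' s).mul (hq.pow 2)).congr_deriv ?_
  simp only [Pi.pow_apply, cdPoly]
  ring

lemma cdGramPoly_strictMono : StrictMono cdGramPoly :=
  strictMono_of_hasDerivAt_pos_of_ne 1 hasDerivAt_cdGramPoly fun s hs ↦ by
    have := cdPoly_pos s
    have : 0 < (s - 1) ^ 2 := by positivity [sub_ne_zero.2 hs]
    positivity

lemma le_cdGramPoly_of_nonneg {s : ℝ} (hs : 0 ≤ s) : 25 / 36 * s ≤ cdGramPoly s := by
  have h := pow_le_pow_left₀ (by norm_num) (five_sixths_le_cdPoly s) 2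
  rw [cdGramPoly, mul_comm]
  exact mul_le_mul_of_nonneg_left (by linarith) hs

lemma cdGramPoly_le_of_nonpos {s : ℝ} (hs : s ≤ 0) : cdGramPoly s ≤ 25 / 36 * s := by
  have h := pow_le_pow_left₀ (by norm_num) (five_sixths_le_cdPoly s) 2
  rw [cdGramPoly, mul_comm (25 / 36)]
  exact mul_le_mul_of_nonpos_left (by linarith) hs

lemma tendsto_cdGramPoly_atTop : Tendsto cdGramPoly atTop atTop :=
  tendsto_atTop_mono' _ ((eventually_ge_atTop 0).mono fun _ ↦ le_cdGramPoly_of_nonneg)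
    (tendsto_id.const_mul_atTop (by norm_num))

lemma tendsto_cdGramPoly_atBot : Tendsto cdGramPoly atBot atBot :=
  tendsto_atBot_mono' _ ((eventually_le_atBot 0).mono fun _ ↦ cdGramPoly_le_of_nonpos)
    (tendsto_id.const_mul_atBot (by norm_num))

lemma continuous_cdGramPoly : Continuous cdGramPoly :=
  continuous_id.mul (continuous_cdPoly.pow 2)

noncomputable def cdGramPolyHomeomorph : ℝ ≃ₜ ℝ :=
  (cdGramPoly_strictMono.orderIsoOfSurjective cdGramPoly <|
    continuous_cdGramPoly.surjective tendsto_cdGramPoly_atTop tendsto_cdGramPoly_atBot).toHomeomorph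

lemma cdGramPolyHomeomorph_apply (s : ℝ) : cdGramPolyHomeomorph s = s * cdPoly s ^ 2 := rfl

lemma Matrix.isSelfAdjoint_transpose_mul_self {m n : Type*} [Fintype m] (X : Matrix m n ℝ) :
    IsSelfAdjoint (Xᵀ * X) := by
  have h := isHermitian_conjTranspose_mul_self X
  rwa [conjTranspose_eq_transpose_of_trivial] at h

lemma cfc_cdPoly {A : Type*} [Ring A] [StarRing A] [Algebra ℝ A] [TopologicalSpace A]
    [ContinuousFunctionalCalculus ℝ A IsSelfAdjoint] {a : A} (ha : IsSelfAdjoint a) :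
    cfc cdPoly a = (15 / 8 : ℝ) • 1 - (5 / 4 : ℝ) • a + (3 / 8 : ℝ) • a ^ 2 := by
  rw [show cdPoly = fun s ↦ 15 / 8 - 5 / 4 * s + 3 / 8 * s ^ 2 from rfl, cfc_add .., cfc_sub ..,
    cfc_const .., cfc_const_mul .., cfc_const_mul .., cfc_id' .., cfc_pow_id ..,
    Algebra.algebraMap_eq_smul_one]

section GramScale

variable {m n : Type*} [Fintype m] [Fintype n] [DecidableEq n]

lemma Matrix.transpose_cfc (g : ℝ → ℝ) (A : Matrix n n ℝ) : (cfc g A)ᵀ = cfc g A := by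
  rw [← conjTranspose_eq_transpose_of_trivial, ← star_eq_conjTranspose]
  exact cfc_predicate g A

noncomputable def gramScale (g : ℝ → ℝ) (X : Matrix m n ℝ) : Matrix m n ℝ :=
  X * cfc g (Xᵀ * X)

lemma gramScale_const_one (X : Matrix m n ℝ) : gramScale (fun _ ↦ 1) X = X := by
  have hS := X.isSelfAdjoint_transpose_mul_self
  rw [gramScale, cfc_const_one ℝ (Xᵀ * X), Matrix.mul_one]

lemma transpose_gramScale_mul_gramScale {g : ℝ → ℝ} (hg : Continuous g) (X : Matrix m n ℝ) :
    (gramScale g X)ᵀ * gramScale g X = cfc (fun s ↦ s * g s ^ 2) (Xᵀ * X) := by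
  have hS := X.isSelfAdjoint_transpose_mul_self
  have hfun : (fun s ↦ s * g s ^ 2) = fun s ↦ g s * (s * g s) := by ext s; ring
  rw [hfun, cfc_mul _ _ (Xᵀ * X), cfc_mul _ _ (Xᵀ * X), cfc_id' ℝ (Xᵀ * X), gramScale,
    transpose_mul, transpose_cfc]
  simp only [Matrix.mul_assoc]

lemma gramScale_gramScale {f g : ℝ → ℝ} (hf : Continuous f) (hg : Continuous g)
    (X : Matrix m n ℝ) :
    gramScale g (gramScale f X) = gramScale (fun s ↦ f s * g (s * f s ^ 2)) X := by
  have hS := X.isSelfAdjoint_transpose_mul_self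
  rw [gramScale, transpose_gramScale_mul_gramScale hf, ← cfc_comp' g (fun s ↦ s * f s ^ 2) _,
    gramScale, Matrix.mul_assoc, ← cfc_mul _ _ _, gramScale]

-- The L2 operator norm induces the usual topology and makes `cfc` isometric, hence continuous.
open scoped Matrix.Norms.L2Operator in
lemma continuous_gramScale {g : ℝ → ℝ} (hg : Continuous g) :
    Continuous (gramScale g : Matrix m n ℝ → Matrix m n ℝ) := by
  have hcfc : Continuous fun X : Matrix m n ℝ ↦ cfc g (Xᵀ * X) :=
    Continuous.cfc_of_mem_nhdsSet g univ_mem (by fun_prop)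
      (fun X ↦ X.isSelfAdjoint_transpose_mul_self) hg.continuousOn
  exact continuous_id.matrix_mul hcfc

noncomputable def gramScaleHomeomorph {g : ℝ → ℝ} (hg : Continuous g) (hg0 : ∀ s, g s ≠ 0)
    (e : ℝ ≃ₜ ℝ) (he : ∀ s, e s = s * g s ^ 2) : Matrix m n ℝ ≃ₜ Matrix m n ℝ :=
  have hginv : Continuous fun t ↦ (g (e.symm t))⁻¹ :=
    (hg.comp e.symm.continuous).inv₀ fun t ↦ hg0 _
  { toFun := gramScale g
    invFun := gramScale fun t ↦ (g (e.symm t))⁻¹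
    left_inv := fun X ↦ by
      have h (s : ℝ) : g s * (g (e.symm (s * g s ^ 2)))⁻¹ = 1 := by
        rw [← he, e.symm_apply_apply, mul_inv_cancel₀ (hg0 s)]
      simp only [gramScale_gramScale hg hginv, h, gramScale_const_one]
    right_inv := fun Y ↦ by
      have h (t : ℝ) : (g (e.symm t))⁻¹ * g (t * (g (e.symm t))⁻¹ ^ 2) = 1 := by
        obtain ⟨u, rfl⟩ := e.surjective t
        have hu : u * g u ^ 2 * (g u)⁻¹ ^ 2 = u := by field_simp [hg0 u]
        rw [e.symm_apply_apply, he, hu, inv_mul_cancel₀ (hg0 u)]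
      simp only [gramScale_gramScale hginv hg, h, gramScale_const_one]
    continuous_toFun := continuous_gramScale hg
    continuous_invFun := continuous_gramScale hginv }

end GramScale

lemma cdMap_eq_gramScale {n p : ℕ} (X : Matrix (Fin n) (Fin p) ℝ) :
    cdMap X = gramScale cdPoly X := by
  rw [gramScale, cfc_cdPoly X.isSelfAdjoint_transpose_mul_self, cdMap]
  simp only [Matrix.mul_add, Matrix.mul_sub, Matrix.mul_smul, Matrix.mul_one]
  module

theorem stmt_5 {n p : ℕ} :
    ∃ e : Matrix (Fin n) (Fin p) ℝ ≃ₜ Matrix (Fin n) (Fin p) ℝ,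
      ∀ X, e X = cdMap X :=
  ⟨gramScaleHomeomorph continuous_cdPoly (fun s ↦ (cdPoly_pos s).ne') cdGramPolyHomeomorph
    cdGramPolyHomeomorph_apply, fun X ↦ (cdMap_eq_gramScale X).symm⟩
end

section
/- For any X ∈ ℝ^{n×p} with ‖X^T X - I_p‖_F ≤ 1/2, it holds that ‖A(X) - P(X)‖_F ≤ 4 ‖X^T X - I_p‖_F^3, where A(X) = (1/8) X (15 I_p - 10 X^T X + 3 (X^T X)^2) and P(X) is the polar factor of X. -/
/-!
Write `X = U Σ Vᵀ`. Then `XᵀX - I = V (Σ² - I) Vᵀ` and, since `A(X) = X q(XᵀX)` for the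
polynomial `q = (15 - 10 t + 3 t²) / 8`, also `A(X) - P(X) = U (Σ q(Σ²) - I) Vᵀ`: both are
diagonal matrices up to isometries, which the Frobenius norm ignores. On the diagonal,
`σ q(σ²) - 1 = (σ - 1)³ (3σ² + 9σ + 8) / 8` and `3σ² + 9σ + 8 ≤ 32 (σ + 1)³` for `σ ≥ 0`, so
`|σ q(σ²) - 1| ≤ 4 |σ² - 1|³`; summing, `∑ xᵢ³ ≤ (∑ xᵢ)³` for `xᵢ = (σᵢ² - 1)²`.
-/

open Matrix

/-- Frobenius norm of a real matrix. -/
noncomputable def frob {m n : ℕ} (X : Matrix (Fin m) (Fin n) ℝ) : ℝ :=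
  Real.sqrt (∑ i, ∑ j, (X i j) ^ 2)

open Polynomial

section Frobenius

variable {m n k l : ℕ}

theorem sum_sq_eq_trace_transpose_mul (A : Matrix (Fin m) (Fin n) ℝ) :
    ∑ i, ∑ j, A i j ^ 2 = trace (Aᵀ * A) := by
  simp only [trace, Matrix.mul_apply, transpose_apply, diag_apply, sq]
  rw [Finset.sum_comm]

theorem frob_mul_mul_transpose {U : Matrix (Fin m) (Fin n) ℝ} {V : Matrix (Fin k) (Fin l) ℝ}
    (hU : Uᵀ * U = 1) (hV : Vᵀ * V = 1) (M : Matrix (Fin n) (Fin l) ℝ) :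
    frob (U * M * Vᵀ) = frob M := by
  have hgram : (U * M * Vᵀ)ᵀ * (U * M * Vᵀ) = V * (Mᵀ * M) * Vᵀ := by
    simp only [transpose_mul, transpose_transpose, Matrix.mul_assoc]
    rw [← Matrix.mul_assoc Uᵀ, hU, Matrix.one_mul]
  rw [frob, frob, sum_sq_eq_trace_transpose_mul, sum_sq_eq_trace_transpose_mul, hgram,
    trace_mul_cycle, ← Matrix.mul_assoc, hV, Matrix.one_mul]

theorem frob_diagonal (d : Fin n → ℝ) : frob (diagonal d) = √(∑ i, d i ^ 2) := by
  simp [frob, diagonal_apply, ite_pow]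

end Frobenius

/-- Conjugation by an orthogonal matrix is an algebra automorphism, and on diagonal matrices
polynomials act entrywise. -/
theorem aeval_conj_diagonal {ι : Type*} [Fintype ι] [DecidableEq ι] {V : Matrix ι ι ℝ}
    (hV : Vᵀ * V = 1) (d : ι → ℝ) (q : ℝ[X]) :
    aeval (V * diagonal d * Vᵀ) q = V * diagonal (fun i => q.eval (d i)) * Vᵀ := by
  let u : unitary (Matrix ι ι ℝ) := ⟨V, mem_unitaryGroup_iff'.mpr <| by
    rwa [star_eq_conjTranspose, conjTranspose_eq_transpose_of_trivial]⟩
  have hconj : V * diagonal d * Vᵀ = Unitary.conjStarAlgAut ℝ _ u (diagonalAlgHom ℝ d) := rfl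
  rw [hconj, aeval_algHom_apply, aeval_algHom_apply, aeval_pi_apply]
  rfl

noncomputable def cdScalar (s : ℝ) : ℝ :=
  s * (15 - 10 * s ^ 2 + 3 * s ^ 4) / 8

theorem cdMap_eq_smul_mul_aeval {n p : ℕ} (A : Matrix (Fin n) (Fin p) ℝ) :
    cdMap A = (1 / 8 : ℝ) •
      (A * aeval (Aᵀ * A) ((15 : ℝ) • 1 - (10 : ℝ) • X + (3 : ℝ) • X ^ 2 : ℝ[X])) := by
  simp [cdMap]

section SVD

variable {m n : ℕ} {U : Matrix (Fin m) (Fin n) ℝ} {V : Matrix (Fin n) (Fin n) ℝ}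

theorem transpose_mul_self_of_svd (hU : Uᵀ * U = 1) (σ : Fin n → ℝ) :
    (U * diagonal σ * Vᵀ)ᵀ * (U * diagonal σ * Vᵀ) = V * diagonal (fun i => σ i ^ 2) * Vᵀ := by
  simp only [transpose_mul, transpose_transpose, diagonal_transpose, Matrix.mul_assoc]
  rw [← Matrix.mul_assoc Uᵀ, hU, Matrix.one_mul, ← Matrix.mul_assoc (diagonal σ),
    diagonal_mul_diagonal]
  simp only [sq]

theorem transpose_mul_self_sub_one_of_svd (hU : Uᵀ * U = 1) (hV : Vᵀ * V = 1)
    (σ : Fin n → ℝ) :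
    (U * diagonal σ * Vᵀ)ᵀ * (U * diagonal σ * Vᵀ) - 1
      = V * diagonal (fun i => σ i ^ 2 - 1) * Vᵀ := by
  rw [transpose_mul_self_of_svd hU]
  have h := aeval_conj_diagonal hV (fun i => σ i ^ 2) (X - 1)
  simp only [map_sub, aeval_X, map_one, eval_sub, eval_X, eval_one] at h
  exact h

theorem svd_mul_aeval_transpose_mul_self (hU : Uᵀ * U = 1) (hV : Vᵀ * V = 1)
    (σ : Fin n → ℝ) (q : ℝ[X]) :
    U * diagonal σ * Vᵀ * aeval ((U * diagonal σ * Vᵀ)ᵀ * (U * diagonal σ * Vᵀ)) q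
      = U * diagonal (fun i => σ i * q.eval (σ i ^ 2)) * Vᵀ := by
  rw [transpose_mul_self_of_svd hU, aeval_conj_diagonal hV]
  simp only [Matrix.mul_assoc]
  rw [← Matrix.mul_assoc Vᵀ, hV, Matrix.one_mul, ← Matrix.mul_assoc (diagonal σ),
    diagonal_mul_diagonal]

theorem cdMap_svd (hU : Uᵀ * U = 1) (hV : Vᵀ * V = 1) (σ : Fin n → ℝ) :
    cdMap (U * diagonal σ * Vᵀ) = U * diagonal (fun i => cdScalar (σ i)) * Vᵀ := by
  rw [cdMap_eq_smul_mul_aeval, svd_mul_aeval_transpose_mul_self hU hV, ← Matrix.smul_mul,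
    ← Matrix.mul_smul, ← diagonal_smul]
  congr 3
  funext i
  simp only [cdScalar, eval_add, eval_sub, eval_smul, eval_one, eval_X, eval_pow,
    Pi.smul_apply, smul_eq_mul]
  ring

end SVD

theorem abs_cdScalar_sub_one_le {s : ℝ} (hs : 0 ≤ s) :
    |cdScalar s - 1| ≤ 4 * |s ^ 2 - 1| ^ 3 := by
  have hfactor : cdScalar s - 1 = (s - 1) ^ 3 * (3 * s ^ 2 + 9 * s + 8) / 8 := by
    rw [cdScalar]; ring
  have hcubic : 3 * s ^ 2 + 9 * s + 8 ≤ 32 * (s + 1) ^ 3 := by nlinarith [pow_nonneg hs 3]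
  rw [hfactor, show s ^ 2 - 1 = (s - 1) * (s + 1) by ring, abs_div, abs_mul, abs_mul, abs_pow,
    abs_of_nonneg (by positivity : (0 : ℝ) ≤ 3 * s ^ 2 + 9 * s + 8),
    abs_of_nonneg (by positivity : (0 : ℝ) ≤ s + 1), abs_of_pos (by norm_num : (0 : ℝ) < 8)]
  have := mul_le_mul_of_nonneg_left hcubic (pow_nonneg (abs_nonneg (s - 1)) 3)
  nlinarith

theorem sum_pow_three_le_pow_three_sum {ι : Type*} {s : Finset ι} {x : ι → ℝ}
    (hx : ∀ i ∈ s, 0 ≤ x i) : ∑ i ∈ s, x i ^ 3 ≤ (∑ i ∈ s, x i) ^ 3 := by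
  calc ∑ i ∈ s, x i ^ 3 ≤ ∑ i ∈ s, x i * (∑ j ∈ s, x j) ^ 2 := by
        refine Finset.sum_le_sum fun i hi => ?_
        rw [pow_succ']
        exact mul_le_mul_of_nonneg_left
          (pow_le_pow_left₀ (hx i hi) (Finset.single_le_sum hx hi) 2) (hx i hi)
    _ = (∑ i ∈ s, x i) ^ 3 := by rw [← Finset.sum_mul]; ring

theorem sqrt_sum_sq_le_of_abs_le {ι : Type*} [Fintype ι] {a b : ι → ℝ} {c : ℝ} (hc : 0 ≤ c)
    (h : ∀ i, |a i| ≤ c * |b i| ^ 3) : √(∑ i, a i ^ 2) ≤ c * √(∑ i, b i ^ 2) ^ 3 := by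
  have hsq : ∀ i, a i ^ 2 ≤ c ^ 2 * (b i ^ 2) ^ 3 := fun i => by
    calc a i ^ 2 = |a i| ^ 2 := (sq_abs _).symm
      _ ≤ (c * |b i| ^ 3) ^ 2 := pow_le_pow_left₀ (abs_nonneg _) (h i) 2
      _ = c ^ 2 * (b i ^ 2) ^ 3 := by rw [mul_pow, ← pow_mul, ← sq_abs (b i), ← pow_mul]
  have hS : 0 ≤ ∑ i, b i ^ 2 := by positivity
  rw [Real.sqrt_le_left (by positivity)]
  calc ∑ i, a i ^ 2 ≤ c ^ 2 * ∑ i, (b i ^ 2) ^ 3 := by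
        rw [Finset.mul_sum]; exact Finset.sum_le_sum fun i _ => hsq i
    _ ≤ c ^ 2 * (∑ i, b i ^ 2) ^ 3 := by
        gcongr; exact sum_pow_three_le_pow_three_sum fun i _ => sq_nonneg (b i)
    _ = (c * √(∑ i, b i ^ 2) ^ 3) ^ 2 := by
        rw [mul_pow, ← pow_mul, mul_comm 3, pow_mul, Real.sq_sqrt hS]

theorem stmt_12_general {n p : ℕ} (X U : Matrix (Fin n) (Fin p) ℝ)
    (V : Matrix (Fin p) (Fin p) ℝ) (σ : Fin p → ℝ)
    (hU : Uᵀ * U = 1) (hV : Vᵀ * V = 1)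
    (hσ : ∀ i, 0 ≤ σ i)
    (hX : X = U * Matrix.diagonal σ * Vᵀ) :
    frob (cdMap X - U * Vᵀ) ≤ 4 * (frob (Xᵀ * X - 1)) ^ 3 := by
  subst hX
  have hpolar : U * Vᵀ = U * diagonal (fun _ : Fin p => (1 : ℝ)) * Vᵀ := by
    rw [diagonal_one, Matrix.mul_one]
  rw [cdMap_svd hU hV, hpolar, ← Matrix.sub_mul, ← Matrix.mul_sub, diagonal_sub,
    frob_mul_mul_transpose hU hV, transpose_mul_self_sub_one_of_svd hU hV,
    frob_mul_mul_transpose hV hV, frob_diagonal, frob_diagonal]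
  exact sqrt_sum_sq_le_of_abs_le (by norm_num) fun i => abs_cdScalar_sub_one_le (hσ i)

/-- For `‖XᵀX - Iₚ‖_F ≤ 1/2` and any economical SVD `X = U Σ Vᵀ`, with polar factor
`P(X) = U Vᵀ`, one has `‖A(X) - P(X)‖_F ≤ 4 ‖XᵀX - Iₚ‖_F³`. -/
theorem stmt_12 {n p : ℕ} (X U : Matrix (Fin n) (Fin p) ℝ)
    (V : Matrix (Fin p) (Fin p) ℝ) (σ : Fin p → ℝ)
    (hU : Uᵀ * U = 1) (hV : Vᵀ * V = 1) (hV' : V * Vᵀ = 1)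
    (hσ : ∀ i, 0 ≤ σ i)
    (hX : X = U * Matrix.diagonal σ * Vᵀ)
    (hfeas : frob (Xᵀ * X - 1) ≤ 1 / 2) :
    frob (cdMap X - U * Vᵀ) ≤ 4 * (frob (Xᵀ * X - 1)) ^ 3 :=
  stmt_12_general X U V σ hU hV hσ hX
end

section
/- Let Y ∈ ℝ^{n×p} with ‖Y^T Y - I_p‖_F ≤ 1/6, D, with ‖D‖_F ≤ M_2, β > 0, 0 < η ≤ 1/(2β), and set Y_+ = Y - η(D + β Y(Y^T Y - I_p)). Then ‖Y_+^T Y_+ - I_p‖_F ≤ (1 - (5/6)ηβ) ‖Y^T Y - I_p‖_F + 3η M_2 + η^2 M_2^2. -/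
/-!
With `G = YᵀY - 1` and `W = D + β Y G`, the residual of `Y₊ = Y - η W` expands as
`(1 - 2ηβ) G - 2ηβ G² - η (DᵀY + YᵀD) + η² WᵀW`, because `YᵀW = YᵀD + β (G² + G)`: the
gradient of the penalty contracts `G` at first order. Multiplying by `Y` on either side enlarges
Frobenius norms by at most `1 + ‖G‖ ≤ 7/6`, since `‖Y A‖² = ⟨A, (1 + G) A⟩`; with `2ηβ ≤ 1` and
`‖G‖ ≤ 1/6` the remaining terms are absorbed into `(1 - 5/6 ηβ) ‖G‖ + 3η M₂ + η² M₂²`.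
-/

open Matrix

open scoped Matrix.Norms.Frobenius

namespace Matrix

variable {l m n : Type*} [Fintype l] [Fintype m] [Fintype n]

theorem frobenius_norm_sq_eq_trace (A : Matrix m n ℝ) : ‖A‖ ^ 2 = trace (Aᵀ * A) := by
  rw [frobenius_norm_def, ← Real.sqrt_eq_rpow, Real.sq_sqrt (by positivity)]
  simp only [Real.norm_eq_abs, Real.rpow_two, pow_two, abs_mul_abs_self, trace, diag_apply,
    mul_apply, transpose_apply]
  exact Finset.sum_comm

/-- Cauchy–Schwarz for the Frobenius inner product, obtained by polarizing the triangle
inequality. -/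
theorem trace_transpose_mul_le (A B : Matrix m n ℝ) : trace (Aᵀ * B) ≤ ‖A‖ * ‖B‖ := by
  have hpolar : ‖A + B‖ ^ 2 = ‖A‖ ^ 2 + 2 * trace (Aᵀ * B) + ‖B‖ ^ 2 := by
    have hsymm : trace (Bᵀ * A) = trace (Aᵀ * B) := by
      rw [← trace_transpose, transpose_mul, transpose_transpose]
    simp only [frobenius_norm_sq_eq_trace, transpose_add, Matrix.add_mul, Matrix.mul_add,
      trace_add, hsymm]
    ring
  nlinarith [norm_add_le A B, norm_nonneg (A + B), norm_nonneg A, norm_nonneg B]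

theorem frobenius_norm_mul_le_one_add_left [DecidableEq m] (Y : Matrix n m ℝ)
    (A : Matrix m l ℝ) : ‖Y * A‖ ≤ (1 + ‖Yᵀ * Y - 1‖) * ‖A‖ := by
  set G := Yᵀ * Y - 1
  have hYY : Yᵀ * Y = 1 + G := (add_sub_cancel 1 (Yᵀ * Y)).symm
  have hsq : ‖Y * A‖ ^ 2 ≤ (1 + ‖G‖) * ‖A‖ ^ 2 :=
    calc ‖Y * A‖ ^ 2 = trace (Aᵀ * A) + trace (Aᵀ * (G * A)) := by
          rw [frobenius_norm_sq_eq_trace, transpose_mul, Matrix.mul_assoc, ← Matrix.mul_assoc Yᵀ,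
            hYY, Matrix.add_mul, Matrix.one_mul, Matrix.mul_add, trace_add]
      _ ≤ ‖A‖ ^ 2 + ‖A‖ * (‖G‖ * ‖A‖) := by
          rw [← frobenius_norm_sq_eq_trace]
          gcongr
          exact (trace_transpose_mul_le A _).trans (by gcongr; exact frobenius_norm_mul G A)
      _ = (1 + ‖G‖) * ‖A‖ ^ 2 := by ring
  have hG := norm_nonneg G
  exact abs_le_of_sq_le_sq' (by nlinarith [norm_nonneg A]) (by positivity) |>.2

theorem frobenius_norm_mul_le_one_add_right [DecidableEq m] (Y : Matrix n m ℝ)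
    (A : Matrix l n ℝ) : ‖A * Y‖ ≤ (1 + ‖Yᵀ * Y - 1‖) * ‖A‖ := by
  set c := 1 + ‖Yᵀ * Y - 1‖
  -- `A Y Yᵀ = (Y (A Y)ᵀ)ᵀ` reduces the bound to the left-multiplication one.
  have hsq : ‖A * Y‖ ^ 2 ≤ c * ‖A‖ * ‖A * Y‖ :=
    calc ‖A * Y‖ ^ 2 = trace (Aᵀ * (Y * (A * Y)ᵀ)ᵀ) := by
          rw [frobenius_norm_sq_eq_trace, trace_mul_comm, trace_mul_comm Aᵀ]
          simp only [transpose_mul, transpose_transpose, Matrix.mul_assoc]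
      _ ≤ ‖A‖ * ‖Y * (A * Y)ᵀ‖ := by
          rw [← frobenius_norm_transpose (Y * _)]
          exact trace_transpose_mul_le A _
      _ ≤ ‖A‖ * (c * ‖A * Y‖) := by
          gcongr
          simpa only [frobenius_norm_transpose] using frobenius_norm_mul_le_one_add_left Y (A * Y)ᵀ
      _ = c * ‖A‖ * ‖A * Y‖ := by ring
  have hc : 0 ≤ c * ‖A‖ := by positivity
  nlinarith [norm_nonneg (A * Y)]

variable {k : Type*} [Fintype k] [DecidableEq k]

theorem gradient_step_residual_eq (Y D : Matrix m k ℝ) (η β : ℝ) :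
    (Y - η • (D + β • (Y * (Yᵀ * Y - 1))))ᵀ * (Y - η • (D + β • (Y * (Yᵀ * Y - 1)))) - 1 =
      (1 - 2 * η * β) • (Yᵀ * Y - 1) - (2 * η * β) • ((Yᵀ * Y - 1) * (Yᵀ * Y - 1))
        - η • (Dᵀ * Y + Yᵀ * D) +
        η ^ 2 • ((D + β • (Y * (Yᵀ * Y - 1)))ᵀ * (D + β • (Y * (Yᵀ * Y - 1)))) := by
  set G := Yᵀ * Y - 1
  set W := D + β • (Y * G)
  have hYY : Yᵀ * Y = G + 1 := (sub_add_cancel _ 1).symm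
  have hGt : Gᵀ = G := by simp only [G, transpose_sub, transpose_mul, transpose_transpose,
    transpose_one]
  have hYW : Yᵀ * W = Yᵀ * D + β • (G * G + G) := by
    rw [Matrix.mul_add, Matrix.mul_smul, ← Matrix.mul_assoc, hYY, Matrix.add_mul, Matrix.one_mul]
  have hWY : Wᵀ * Y = Dᵀ * Y + β • (G * G + G) := by
    rw [transpose_add, transpose_smul, transpose_mul, hGt, Matrix.add_mul, Matrix.smul_mul,
      Matrix.mul_assoc, hYY, Matrix.mul_add, Matrix.mul_one]
  simp only [transpose_sub, transpose_smul, Matrix.sub_mul, Matrix.mul_sub, Matrix.smul_mul,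
    Matrix.mul_smul, hYY, hYW, hWY]
  module

theorem norm_gradient_step_residual_le (Y D : Matrix m k ℝ) {η β M : ℝ} (hη : 0 ≤ η)
    (hβ : 0 ≤ β) (hηβ : 2 * η * β ≤ 1) (hD : ‖D‖ ≤ M) :
    ‖(Y - η • (D + β • (Y * (Yᵀ * Y - 1))))ᵀ * (Y - η • (D + β • (Y * (Yᵀ * Y - 1)))) - 1‖ ≤
      (1 - 2 * η * β) * ‖Yᵀ * Y - 1‖ + 2 * η * β * ‖Yᵀ * Y - 1‖ ^ 2 +
        η * (2 * ((1 + ‖Yᵀ * Y - 1‖) * M)) +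
        η ^ 2 * (M + β * ((1 + ‖Yᵀ * Y - 1‖) * ‖Yᵀ * Y - 1‖)) ^ 2 := by
  rw [gradient_step_residual_eq]
  set G := Yᵀ * Y - 1
  set W := D + β • (Y * G)
  have hW : ‖W‖ ≤ M + β * ((1 + ‖G‖) * ‖G‖) := by
    refine (norm_add_le _ _).trans (add_le_add hD ?_)
    rw [norm_smul, Real.norm_of_nonneg hβ]
    gcongr
    exact frobenius_norm_mul_le_one_add_left Y G
  have hDY : ‖Dᵀ * Y‖ ≤ (1 + ‖G‖) * M :=
    (frobenius_norm_mul_le_one_add_right Y Dᵀ).trans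
      (by rw [frobenius_norm_transpose]; gcongr)
  have hYD : ‖Yᵀ * D‖ = ‖Dᵀ * Y‖ := by
    rw [← frobenius_norm_transpose (Dᵀ * Y), transpose_mul, transpose_transpose]
  have hGG : ‖G * G‖ ≤ ‖G‖ ^ 2 := (frobenius_norm_mul G G).trans_eq (sq _).symm
  have hWW : ‖Wᵀ * W‖ ≤ ‖W‖ ^ 2 := (frobenius_norm_mul Wᵀ W).trans_eq (by
    rw [frobenius_norm_transpose, sq])
  calc _ ≤ ‖(1 - 2 * η * β) • G‖ + ‖(2 * η * β) • (G * G)‖ + ‖η • (Dᵀ * Y + Yᵀ * D)‖ +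
        ‖η ^ 2 • (Wᵀ * W)‖ :=
        (norm_add_le _ _).trans (add_le_add_left ((norm_sub_le _ _).trans
          (add_le_add_left (norm_sub_le _ _) _)) _)
    _ ≤ _ := by
        rw [norm_smul, norm_smul, norm_smul, norm_smul, Real.norm_of_nonneg (by linarith),
          Real.norm_of_nonneg (by positivity), Real.norm_of_nonneg hη,
          Real.norm_of_nonneg (by positivity)]
        gcongr
        · exact (norm_add_le _ _).trans (by rw [hYD]; linarith)
        · exact hWW.trans (by gcongr)

end Matrix

theorem frob_eq_norm {m n : ℕ} (X : Matrix (Fin m) (Fin n) ℝ) : frob X = ‖X‖ := by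
  rw [frob, Matrix.frobenius_norm_def, Real.sqrt_eq_rpow]
  simp only [Real.norm_eq_abs, Real.rpow_two, sq_abs]

theorem contraction_bound_le {η β g M : ℝ} (hη : 0 ≤ η) (hβ : 0 ≤ β) (hηβ : 2 * η * β ≤ 1)
    (hg₀ : 0 ≤ g) (hg : g ≤ 1 / 6) (hM : 0 ≤ M) :
    (1 - 2 * η * β) * g + 2 * η * β * g ^ 2 + η * (2 * ((1 + g) * M)) +
        η ^ 2 * (M + β * ((1 + g) * g)) ^ 2 ≤
      (1 - 5 / 6 * η * β) * g + 3 * η * M + η ^ 2 * M ^ 2 := by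
  have hηβg : 0 ≤ η * β * g := by positivity
  have hηM : 0 ≤ η * M := by positivity
  have h1 : η * β * g ≤ 1 / 12 := by nlinarith
  have h2 : η ^ 2 * β ^ 2 * g ^ 2 ≤ 1 / 12 * (η * β * g) := by nlinarith
  have h3 : η ^ 2 * β * M * g ≤ 1 / 12 * (η * M) := by nlinarith
  have h4 : η * β * g ^ 2 ≤ 1 / 6 * (η * β * g) := by nlinarith
  nlinarith

theorem stmt_16 {n p : ℕ} (Y D : Matrix (Fin n) (Fin p) ℝ) (β η M₂ : ℝ)
    (hfeas : frob (Yᵀ * Y - 1) ≤ 1 / 6)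
    (hD : frob D ≤ M₂) (hβ : 0 < β) (hη : 0 < η) (hη' : η ≤ 1 / (2 * β)) :
    frob ((Y - η • (D + β • (Y * (Yᵀ * Y - 1))))ᵀ *
        (Y - η • (D + β • (Y * (Yᵀ * Y - 1)))) - 1) ≤
      (1 - (5 / 6) * η * β) * frob (Yᵀ * Y - 1) + 3 * η * M₂ + η ^ 2 * M₂ ^ 2 := by
  simp only [frob_eq_norm] at hfeas hD ⊢
  have hηβ : 2 * η * β ≤ 1 := by
    rw [le_div_iff₀ (by positivity)] at hη'
    linarith
  exact (norm_gradient_step_residual_le Y D hη.le hβ.le hηβ hD).trans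
    (contraction_bound_le hη.le hβ.le hηβ (norm_nonneg _) hfeas ((norm_nonneg D).trans hD))
end
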